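/- When all agents have additive valuations, every maximum Nash welfare (MNW) allocation of the mixed goods is envy-free up to one good for mixed goods (EF1M) and Pareto optimal (PO). -/

import Mathlib

open MeasureTheory

/-- The interval `I_j = [j/ℓ, (j+1)/ℓ) ⊆ [0,1)` representing the `j`-th of the
`ℓ` divisible goods (so that `I_1, …, I_ℓ` partition the cake `C = [0,1)`). -/
def dgInterval (l : ℕ) (j : Fin l) : Set ℝ :=
  Set.Ico ((j : ℝ) / l) (((j : ℝ) + 1) / l)

/-- An allocation of `m` indivisible goods and of the cake `[0,1)` among `n` agents:
the indivisible goods are partitioned into the bundles `ind i`, and the cake `[0,1)`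
is partitioned into the measurable (Borel) pieces `piece i`. -/
structure Alloc (n m : ℕ) where
  ind : Fin n → Finset (Fin m)
  piece : Fin n → Set ℝ
  ind_partition : ∀ g : Fin m, ∃! i : Fin n, g ∈ ind i
  piece_measurable : ∀ i, MeasurableSet (piece i)
  piece_disjoint : ∀ i j : Fin n, i ≠ j → piece i ∩ piece j = ∅
  piece_cover : (⋃ i, piece i) = Set.Ico (0 : ℝ) 1

section

/- `vM i g` is agent `i`'s (additive) value for the indivisible good `g`, and
`μ i` is the (non-atomic, countably additive, finite) measure giving agent `i`'s
value for pieces of the cake. -/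
variable {n m : ℕ} (vM : Fin n → Fin m → ℝ) (μ : Fin n → Measure ℝ)

/-- Value of agent `i` for agent `j`'s bundle `A_j = M_j ∪ C_j` in allocation `A`. -/
noncomputable def valOn (A : Alloc n m) (i j : Fin n) : ℝ :=
  (∑ g ∈ A.ind j, vM i g) + (μ i (A.piece j)).toReal

/-- Utility of agent `i` in allocation `A`: `u_i(A_i) = u_i(M_i) + u_i(C_i)`. -/
noncomputable def util (A : Alloc n m) (i : Fin n) : ℝ := valOn vM μ A i i

/-- Value of agent `i` for agent `j`'s bundle with the indivisible good `g`
removed: `u_i(A_j \ {g})`. -/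
noncomputable def valOnErase (A : Alloc n m) (i j : Fin n) (g : Fin m) : ℝ :=
  (∑ g' ∈ A.ind j \ {g}, vM i g') + (μ i (A.piece j)).toReal

/-- Pareto optimality: no allocation gives every agent at least as much utility
and some agent strictly more. -/
def PO (A : Alloc n m) : Prop :=
  ¬ ∃ A' : Alloc n m,
      (∀ i, util vM μ A i ≤ util vM μ A' i) ∧ ∃ i, util vM μ A i < util vM μ A' i

/-- The set of agents with positive utility in allocation `A`. -/
noncomputable def posSet (A : Alloc n m) : Finset (Fin n) :=
  Finset.univ.filter (fun i => 0 < util vM μ A i)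

/-- A maximum Nash welfare (MNW) allocation: it maximizes the number of agents with
positive utility and, subject to that, maximizes the product of the positive
utilities. -/
def MNW (A : Alloc n m) : Prop :=
  (∀ A' : Alloc n m, (posSet vM μ A').card ≤ (posSet vM μ A).card) ∧
    ∀ A' : Alloc n m, (posSet vM μ A').card = (posSet vM μ A).card →
      (∏ i ∈ posSet vM μ A', util vM μ A' i) ≤ ∏ i ∈ posSet vM μ A, util vM μ A i

/-- Envy-freeness up to one good for mixed goods (EF1M): for all agents `i, j`,
if `M_j = ∅` then `u_i(A_i) ≥ u_i(A_j)`; otherwise `u_i(A_i) ≥ u_i(A_j \ {g})`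
for some indivisible good `g ∈ A_j`. -/
def EF1M (A : Alloc n m) : Prop :=
  ∀ i j : Fin n,
    (A.ind j = ∅ → valOn vM μ A i j ≤ util vM μ A i) ∧
    (A.ind j ≠ ∅ → ∃ g ∈ A.ind j, valOnErase vM μ A i j g ≤ util vM μ A i)

/-- Envy-freeness for mixed goods (EFM): for all agents `i, j`, if `C_j = ∅` then
`u_i(A_i) ≥ u_i(A_j)` or `u_i(A_i) ≥ u_i(A_j \ {g})` for some indivisible good
`g ∈ A_j`; otherwise `u_i(A_i) ≥ u_i(A_j)`. -/
def EFM (A : Alloc n m) : Prop :=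
  ∀ i j : Fin n,
    (A.piece j = ∅ →
      (valOn vM μ A i j ≤ util vM μ A i ∨
        ∃ g ∈ A.ind j, valOnErase vM μ A i j g ≤ util vM μ A i)) ∧
    (A.piece j ≠ ∅ → valOn vM μ A i j ≤ util vM μ A i)

/-- Envy-freeness up to any good for mixed goods (EFXM): for all agents `i, j`,
if `C_j = ∅` then `u_i(A_i) ≥ u_i(A_j)` or `u_i(A_i) ≥ u_i(A_j \ {g})` for every
indivisible good `g ∈ A_j`; otherwise `u_i(A_i) ≥ u_i(A_j)`. -/
def EFXM (A : Alloc n m) : Prop :=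
  ∀ i j : Fin n,
    (A.piece j = ∅ →
      (valOn vM μ A i j ≤ util vM μ A i ∨
        ∀ g ∈ A.ind j, valOnErase vM μ A i j g ≤ util vM μ A i)) ∧
    (A.piece j ≠ ∅ → valOn vM μ A i j ≤ util vM μ A i)

/-- Weak envy-freeness for mixed goods (weak EFM): for all agents `i, j`, if
`M_j ≠ ∅` and additionally either `C_j = ∅` or `u_i(C_j) = 0`, then
`u_i(A_i) ≥ u_i(A_j \ {g})` for some indivisible good `g ∈ A_j`; otherwise
`u_i(A_i) ≥ u_i(A_j)`. -/
def WeakEFM (A : Alloc n m) : Prop :=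
  ∀ i j : Fin n,
    ((A.ind j ≠ ∅ ∧ (A.piece j = ∅ ∨ (μ i (A.piece j)).toReal = 0)) →
      ∃ g ∈ A.ind j, valOnErase vM μ A i j g ≤ util vM μ A i) ∧
    (¬ (A.ind j ≠ ∅ ∧ (A.piece j = ∅ ∨ (μ i (A.piece j)).toReal = 0)) →
      valOn vM μ A i j ≤ util vM μ A i)

end

/-!
If agent `i` with utility `a` envies agent `j` even after removing any one good from `j`'s bundle,
then moving part of that bundle from `j` to `i` improves the Nash welfare. If `j`'s utility `b` is
zero, `i` takes the whole bundle. Otherwise, with `P` the value of `j`'s bundle to `i`, a part that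
`i` values at `x > 0` with `a + x < P` and `j` values at `y ≤ x b / P` gives `a b < (a + x)(b - y)`.
Some single good of `j` may have this ratio; if none has, `j` values the goods relatively more than
`i`, so the cake in `j`'s bundle has the ratio, and halving it repeatedly, always keeping the half
that `j` values less, yields a piece that is small enough for `i` and still has the ratio.
Pareto optimality follows from the maximality of the number and product of positive utilities.
-/

open Set Filter Topology

section Halving

theorem continuous_measureReal_Iic (ρ : Measure ℝ) [IsFiniteMeasure ρ] [NullSingletonClass ρ] :
    Continuous fun x => ρ.real (Iic x) := by
  have h : ∀ a, ContinuousOn (fun b => ∫ _ in Iic b, (1 : ℝ) ∂ρ) (Iic a) := fun a =>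
    (integrableOn_const (measure_ne_top _ _)).continuousOn_Iic_primitive_Iic
  simp only [setIntegral_const, smul_eq_mul, mul_one] at h
  exact continuous_iff_continuousAt.2 fun x =>
    (h (x + 1)).continuousAt (Iic_mem_nhds (lt_add_one x))

theorem exists_measureReal_Iic_eq (ρ : Measure ℝ) [IsFiniteMeasure ρ] [NullSingletonClass ρ]
    {r : ℝ} (h0 : 0 < r) (h1 : r < ρ.real univ) : ∃ x, ρ.real (Iic x) = r := by
  have hbot : Tendsto (fun x => ρ.real (Iic x)) atBot (𝓝 0) := by
    have := tendsto_measure_iInter_atBot (μ := ρ) (fun x : ℝ => measurableSet_Iic.nullMeasurableSet)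
      (fun _ _ h => Iic_subset_Iic.2 h) ⟨0, measure_ne_top _ _⟩
    rw [iInter_Iic_eq_empty_iff.2 (by simp [not_bddBelow_univ]), measure_empty] at this
    exact (ENNReal.tendsto_toReal ENNReal.zero_ne_top).comp this
  have htop : Tendsto (fun x => ρ.real (Iic x)) atTop (𝓝 (ρ.real univ)) :=
    (ENNReal.tendsto_toReal (measure_ne_top _ _)).comp (tendsto_measure_Iic_atTop ρ)
  exact mem_range_of_exists_le_of_exists_ge (continuous_measureReal_Iic ρ)
    (hbot.eventually (ge_mem_nhds h0)).exists (htop.eventually (le_mem_nhds h1)).exists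

variable (ν₁ ν₂ : Measure ℝ) [IsFiniteMeasure ν₁] [IsFiniteMeasure ν₂] [NullSingletonClass ν₁]
  {s : Set ℝ}

theorem exists_subset_two_mul_measureReal_eq (hs : MeasurableSet s) (hpos : 0 < ν₁.real s) :
    ∃ t ⊆ s, MeasurableSet t ∧ 2 * ν₁.real t = ν₁.real s ∧ 2 * ν₂.real t ≤ ν₂.real s := by
  obtain ⟨x, hx⟩ := exists_measureReal_Iic_eq (ν₁.restrict s) (r := ν₁.real s / 2)
    (by positivity) (by rw [measureReal_restrict_apply .univ, univ_inter]; linarith)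
  rw [measureReal_restrict_apply measurableSet_Iic, inter_comm] at hx
  have h₁ := measureReal_inter_add_sdiff (μ := ν₁) (s := s) (measurableSet_Iic (a := x))
  have h₂ := measureReal_inter_add_sdiff (μ := ν₂) (s := s) (measurableSet_Iic (a := x))
  rcases le_total (ν₂.real (s ∩ Iic x)) (ν₂.real (s \ Iic x)) with h | h
  · exact ⟨s ∩ Iic x, inter_subset_left, hs.inter measurableSet_Iic, by linarith, by linarith⟩
  · exact ⟨s \ Iic x, sdiff_subset, hs.diff measurableSet_Iic, by linarith, by linarith⟩

theorem exists_subset_two_pow_mul_measureReal_eq (hs : MeasurableSet s) (hpos : 0 < ν₁.real s)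
    (k : ℕ) : ∃ t ⊆ s, MeasurableSet t ∧ 2 ^ k * ν₁.real t = ν₁.real s ∧
      2 ^ k * ν₂.real t ≤ ν₂.real s := by
  induction k with
  | zero => exact ⟨s, subset_rfl, hs, by simp, by simp⟩
  | succ k ih =>
    obtain ⟨t, hts, ht, h₁, h₂⟩ := ih
    have htpos : 0 < ν₁.real t := pos_of_mul_pos_right (h₁ ▸ hpos) (by positivity)
    obtain ⟨u, hut, hu, hu₁, hu₂⟩ := exists_subset_two_mul_measureReal_eq ν₁ ν₂ ht htpos
    refine ⟨u, hut.trans hts, hu, by rw [pow_succ, mul_assoc, hu₁, h₁], ?_⟩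
    rw [pow_succ, mul_assoc]
    exact (mul_le_mul_of_nonneg_left hu₂ (by positivity)).trans h₂

theorem exists_subset_measureReal_lt_and_mul_le (hs : MeasurableSet s) (hpos : 0 < ν₁.real s)
    {ε : ℝ} (hε : 0 < ε) : ∃ t ⊆ s, MeasurableSet t ∧ 0 < ν₁.real t ∧ ν₁.real t < ε ∧
      ν₂.real t * ν₁.real s ≤ ν₁.real t * ν₂.real s := by
  obtain ⟨k, hk⟩ := pow_unbounded_of_one_lt (ν₁.real s / ε) one_lt_two
  obtain ⟨t, hts, ht, h₁, h₂⟩ := exists_subset_two_pow_mul_measureReal_eq ν₁ ν₂ hs hpos k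
  have h2k : (0 : ℝ) < 2 ^ k := by positivity
  rw [div_lt_iff₀ hε, ← h₁] at hk
  refine ⟨t, hts, ht, pos_of_mul_pos_right (h₁ ▸ hpos) h2k.le,
    lt_of_mul_lt_mul_left hk h2k.le, ?_⟩
  rw [← h₁]
  nlinarith [measureReal_nonneg (μ := ν₁) (s := t)]

end Halving

theorem mul_lt_add_mul_sub {a b x y P : ℝ} (hb : 0 < b) (hx : 0 < x) (hy : 0 ≤ y)
    (hxP : a + x < P) (hratio : y * P ≤ x * b) : a * b < (a + x) * (b - y) := by
  rcases hy.eq_or_lt with rfl | hy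
  · nlinarith
  · nlinarith

theorem Finset.prod_lt_prod_of_eq_off_pair {ι : Type*} [DecidableEq ι] {s : Finset ι}
    {f g : ι → ℝ} {i j : ι} (hi : i ∈ s) (hj : j ∈ s) (hij : i ≠ j) (hf : ∀ k ∈ s, 0 < f k)
    (hfg : ∀ k ∈ s, k ≠ i → k ≠ j → g k = f k) (hlt : f i * f j < g i * g j) :
    ∏ k ∈ s, f k < ∏ k ∈ s, g k := by
  have hsub : {i, j} ⊆ s := Finset.insert_subset hi (Finset.singleton_subset_iff.2 hj)
  have hrest : ∏ k ∈ s \ {i, j}, g k = ∏ k ∈ s \ {i, j}, f k := by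
    refine Finset.prod_congr rfl fun k hk => ?_
    obtain ⟨hks, hkij⟩ := Finset.mem_sdiff.1 hk
    exact hfg k hks (fun h => hkij (by simp [h])) (fun h => hkij (by simp [h]))
  rw [← Finset.prod_sdiff hsub, ← Finset.prod_sdiff hsub (f := g), Finset.prod_pair hij,
    Finset.prod_pair hij, hrest]
  exact mul_lt_mul_of_pos_left hlt (Finset.prod_pos fun k hk => hf k (Finset.sdiff_subset hk))

theorem pos_and_mul_le_of_forall_mul_lt {ι : Type*} {s : Finset ι} {f h : ι → ℝ} {p q : ℝ}
    (hf : ∀ k ∈ s, 0 ≤ f k) (hh : ∀ k ∈ s, 0 ≤ h k) (hp : 0 ≤ p) (hq : 0 ≤ q)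
    (hP : 0 < ∑ k ∈ s, f k + p)
    (hlt : ∀ k ∈ s, 0 < f k → f k * (∑ k ∈ s, h k + q) < h k * (∑ k ∈ s, f k + p)) :
    0 < p ∧ q * (∑ k ∈ s, f k + p) ≤ p * (∑ k ∈ s, h k + q) := by
  have hle : ∀ k ∈ s, f k * (∑ k ∈ s, h k + q) ≤ h k * (∑ k ∈ s, f k + p) := fun k hk =>
    (hf k hk).eq_or_lt.elim (fun h0 => by rw [← h0, zero_mul]; exact mul_nonneg (hh k hk) hP.le)
      fun h => (hlt k hk h).le
  have hsum := Finset.sum_le_sum hle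
  rw [← Finset.sum_mul, ← Finset.sum_mul] at hsum
  refine ⟨hp.lt_of_ne fun hp0 => ?_, by nlinarith⟩
  subst hp0
  obtain ⟨k, hk, hfk⟩ := Finset.exists_lt_of_sum_lt (f := fun _ => 0) (g := f) (by simpa using hP)
  have hsum' := Finset.sum_lt_sum hle ⟨k, hk, hlt k hk hfk⟩
  rw [← Finset.sum_mul, ← Finset.sum_mul] at hsum'
  nlinarith

section Allocations

variable {n m : ℕ}

namespace Alloc

variable (A : Alloc n m)

theorem piece_subset_Ico (j : Fin n) : A.piece j ⊆ Ico 0 1 :=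
  A.piece_cover ▸ subset_iUnion A.piece j

theorem disjoint_ind {i j : Fin n} (hij : i ≠ j) : Disjoint (A.ind i) (A.ind j) := by
  refine Finset.disjoint_left.2 fun g hi hj => hij ?_
  obtain ⟨k, -, hk⟩ := A.ind_partition g
  exact (hk i hi).trans (hk j hj).symm

theorem disjoint_piece {i j : Fin n} (hij : i ≠ j) : Disjoint (A.piece i) (A.piece j) :=
  disjoint_iff_inter_eq_empty.2 (A.piece_disjoint i j hij)

def give (i : Fin n) (T : Finset (Fin m)) (S : Set ℝ) (hS : MeasurableSet S)
    (hS₁ : S ⊆ Ico 0 1) : Alloc n m where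
  ind k := if k = i then A.ind k ∪ T else A.ind k \ T
  piece k := if k = i then A.piece k ∪ S else A.piece k \ S
  ind_partition g := by
    obtain ⟨k, hk, huniq⟩ := A.ind_partition g
    by_cases hg : g ∈ T
    · refine ⟨i, by simp [hg], fun k' hk' => ?_⟩
      by_contra h
      simp [h, hg] at hk'
    · refine ⟨k, by beta_reduce; split_ifs <;> simp [hk, hg], fun k' hk' => huniq k' ?_⟩
      beta_reduce at hk' ⊢
      split_ifs at hk' <;> simp_all
  piece_measurable k := by
    split_ifs
    exacts [(A.piece_measurable k).union hS, (A.piece_measurable k).diff hS]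
  piece_disjoint a b hab := by
    have := A.disjoint_piece hab
    rw [← disjoint_iff_inter_eq_empty]
    split_ifs with ha hb hb
    · exact absurd (ha.trans hb.symm) hab
    · exact disjoint_union_left.2 ⟨this.mono_right sdiff_subset, disjoint_sdiff_right⟩
    · exact disjoint_union_right.2 ⟨this.mono_left sdiff_subset, disjoint_sdiff_left⟩
    · exact this.mono sdiff_subset sdiff_subset
  piece_cover := by
    refine Subset.antisymm (iUnion_subset fun k => ?_) fun x hx => ?_
    · split_ifs
      exacts [union_subset (A.piece_subset_Ico k) hS₁, sdiff_subset.trans (A.piece_subset_Ico k)]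
    by_cases hxS : x ∈ S
    · exact mem_iUnion.2 ⟨i, by simp [hxS]⟩
    · obtain ⟨k, hk⟩ := mem_iUnion.1 (A.piece_cover ▸ hx)
      exact mem_iUnion.2 ⟨k, by split_ifs <;> simp [hk, hxS]⟩

end Alloc

variable (vM : Fin n → Fin m → ℝ) (μ : Fin n → Measure ℝ)

/-- `valOn vM μ A i j` is `bundleValue vM μ i (A.ind j) (A.piece j)` by definition. -/
noncomputable def bundleValue (i : Fin n) (T : Finset (Fin m)) (S : Set ℝ) : ℝ :=
  ∑ g ∈ T, vM i g + (μ i S).toReal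

variable {vM μ}

theorem bundleValue_nonneg (hnonneg : ∀ i g, 0 ≤ vM i g) (i : Fin n) (T : Finset (Fin m))
    (S : Set ℝ) : 0 ≤ bundleValue vM μ i T S :=
  add_nonneg (Finset.sum_nonneg fun g _ => hnonneg i g) ENNReal.toReal_nonneg

theorem util_nonneg (hnonneg : ∀ i g, 0 ≤ vM i g) (A : Alloc n m) (i : Fin n) :
    0 ≤ util vM μ A i :=
  bundleValue_nonneg hnonneg i _ _

theorem mem_posSet {A : Alloc n m} {i : Fin n} : i ∈ posSet vM μ A ↔ 0 < util vM μ A i := by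
  simp [posSet]

theorem valOnErase_eq {A : Alloc n m} {i j : Fin n} {g : Fin m} (hg : g ∈ A.ind j) :
    valOnErase vM μ A i j g = valOn vM μ A i j - vM i g := by
  rw [valOnErase, valOn, Finset.sum_sdiff_eq_sub (Finset.singleton_subset_iff.2 hg),
    Finset.sum_singleton]
  ring

section Give

variable (A : Alloc n m) {i k : Fin n} {T : Finset (Fin m)} {S : Set ℝ}
  (hSm : MeasurableSet S) (hS₁ : S ⊆ Ico 0 1)

theorem util_give_of_disjoint (hki : k ≠ i) (hT : Disjoint (A.ind k) T)
    (hS : Disjoint (A.piece k) S) : util vM μ (A.give i T S hSm hS₁) k = util vM μ A k := by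
  simp only [util, valOn, Alloc.give, if_neg hki, Finset.sdiff_eq_self_of_disjoint hT,
    hS.sdiff_eq_left]

variable [∀ i, IsFiniteMeasure (μ i)]

theorem util_give_self (hT : Disjoint (A.ind i) T) (hS : Disjoint (A.piece i) S) :
    util vM μ (A.give i T S hSm hS₁) i = util vM μ A i + bundleValue vM μ i T S := by
  simp only [util, valOn, Alloc.give, ↓reduceIte, bundleValue]
  rw [Finset.sum_union hT, measure_union hS hSm,
    ENNReal.toReal_add (measure_ne_top _ _) (measure_ne_top _ _)]
  ring

theorem util_give_of_subset (hki : k ≠ i) (hT : T ⊆ A.ind k) (hS : S ⊆ A.piece k) :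
    util vM μ (A.give i T S hSm hS₁) k = util vM μ A k - bundleValue vM μ k T S := by
  simp only [util, valOn, Alloc.give, if_neg hki, bundleValue]
  rw [Finset.sum_sdiff_eq_sub hT, measure_sdiff hS hSm.nullMeasurableSet (measure_ne_top _ _),
    ENNReal.toReal_sub_of_le (measure_mono hS) (measure_ne_top _ _)]
  ring

end Give

namespace MNW

variable {A A' : Alloc n m}

theorem posSet_eq (hA : MNW vM μ A) (h : posSet vM μ A ⊆ posSet vM μ A') :
    posSet vM μ A' = posSet vM μ A :=
  (Finset.eq_of_subset_of_card_le h (hA.1 A')).symm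

theorem prod_le (hA : MNW vM μ A) (h : posSet vM μ A ⊆ posSet vM μ A') :
    ∏ k ∈ posSet vM μ A, util vM μ A' k ≤ ∏ k ∈ posSet vM μ A, util vM μ A k := by
  have := hA.2 A' (congrArg Finset.card (hA.posSet_eq h))
  rwa [hA.posSet_eq h] at this

theorem posSet_subset_of_eq_off_pair {i j : Fin n}
    (hother : ∀ k, k ≠ i → k ≠ j → util vM μ A' k = util vM μ A k)
    (hi : 0 < util vM μ A' i) (hj : 0 < util vM μ A j → 0 < util vM μ A' j) :
    posSet vM μ A ⊆ posSet vM μ A' := by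
  intro k hk
  rw [mem_posSet] at hk ⊢
  by_cases hki : k = i
  · exact hki ▸ hi
  by_cases hkj : k = j
  · exact hkj ▸ hj (hkj ▸ hk)
  · exact hother k hki hkj ▸ hk

theorem mul_le_of_eq_off_pair (hA : MNW vM μ A) {i j : Fin n} (hij : i ≠ j)
    (hother : ∀ k, k ≠ i → k ≠ j → util vM μ A' k = util vM μ A k)
    (hj : 0 < util vM μ A j) (hi' : 0 < util vM μ A' i) (hj' : 0 < util vM μ A' j) :
    util vM μ A' i * util vM μ A' j ≤ util vM μ A i * util vM μ A j := by
  have hsub := posSet_subset_of_eq_off_pair hother hi' fun _ => hj'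
  have hi : i ∈ posSet vM μ A := hA.posSet_eq hsub ▸ mem_posSet.2 hi'
  by_contra! hlt
  exact (hA.prod_le hsub).not_gt <| Finset.prod_lt_prod_of_eq_off_pair hi (mem_posSet.2 hj)
    hij (fun k hk => mem_posSet.1 hk) (fun k _ hki hkj => hother k hki hkj) hlt

theorem util_le_of_eq_off_pair (hA : MNW vM μ A) {i j : Fin n}
    (hother : ∀ k, k ≠ i → k ≠ j → util vM μ A' k = util vM μ A k)
    (hj : ¬ 0 < util vM μ A j) (hi' : 0 < util vM μ A' i) :
    util vM μ A' i ≤ util vM μ A i := by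
  have hsub := posSet_subset_of_eq_off_pair hother hi' fun h => absurd h hj
  have hi : i ∈ posSet vM μ A := hA.posSet_eq hsub ▸ mem_posSet.2 hi'
  by_contra! hlt
  refine (hA.prod_le hsub).not_gt <| Finset.prod_lt_prod (fun k hk => mem_posSet.1 hk)
    (fun k hk => ?_) ⟨i, hi, hlt⟩
  by_cases hki : k = i
  · exact hki ▸ hlt.le
  · exact (hother k hki fun hkj => hj (hkj ▸ mem_posSet.1 hk)).ge

theorem po (hnonneg : ∀ i g, 0 ≤ vM i g) (hA : MNW vM μ A) : PO vM μ A := by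
  rintro ⟨A', hle, k, hk⟩
  have hsub : posSet vM μ A ⊆ posSet vM μ A' := fun k' hk' =>
    mem_posSet.2 ((mem_posSet.1 hk').trans_le (hle k'))
  by_cases hkA : k ∈ posSet vM μ A
  · exact (hA.prod_le hsub).not_gt
      (Finset.prod_lt_prod (fun k' hk' => mem_posSet.1 hk') (fun k' _ => hle k') ⟨k, hkA, hk⟩)
  · exact hkA (hA.posSet_eq hsub ▸ mem_posSet.2 ((util_nonneg hnonneg A k).trans_lt hk))

end MNW

variable [∀ i, IsFiniteMeasure (μ i)] [∀ i, NullSingletonClass (μ i)]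

theorem exists_subbundle_mul_le (hnonneg : ∀ i g, 0 ≤ vM i g) {i j : Fin n}
    {M : Finset (Fin m)} {C : Set ℝ} (hC : MeasurableSet C) {a : ℝ} (ha : 0 ≤ a)
    (hP : a < bundleValue vM μ i M C)
    (hPg : ∀ g ∈ M, a + vM i g < bundleValue vM μ i M C) :
    ∃ T ⊆ M, ∃ S ⊆ C, MeasurableSet S ∧ 0 < bundleValue vM μ i T S ∧
      a + bundleValue vM μ i T S < bundleValue vM μ i M C ∧
      bundleValue vM μ j T S * bundleValue vM μ i M C ≤
        bundleValue vM μ i T S * bundleValue vM μ j M C := by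
  by_cases hgood : ∃ g ∈ M, 0 < vM i g ∧
      vM j g * bundleValue vM μ i M C ≤ vM i g * bundleValue vM μ j M C
  · obtain ⟨g, hg, hpos, hratio⟩ := hgood
    refine ⟨{g}, Finset.singleton_subset_iff.2 hg, ∅, empty_subset C, .empty, ?_⟩
    simp only [bundleValue, Finset.sum_singleton, measure_empty, ENNReal.toReal_zero, add_zero]
    exact ⟨hpos, hPg g hg, hratio⟩
  -- `j` values every good relatively more than `i` does, so the cake is relatively better for `i`.
  push Not at hgood
  set P := bundleValue vM μ i M C
  set b := bundleValue vM μ j M C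
  obtain ⟨hp, hqP⟩ : 0 < (μ i C).toReal ∧ (μ j C).toReal * P ≤ (μ i C).toReal * b :=
    pos_and_mul_le_of_forall_mul_lt (fun g _ => hnonneg i g) (fun g _ => hnonneg j g)
      ENNReal.toReal_nonneg ENNReal.toReal_nonneg (ha.trans_lt hP) hgood
  obtain ⟨t, htC, ht, hx, hxε, hratio⟩ :=
    exists_subset_measureReal_lt_and_mul_le (μ i) (μ j) hC hp (sub_pos.2 hP)
  simp only [measureReal_def] at hx hxε hratio
  refine ⟨∅, Finset.empty_subset M, t, htC, ht, ?_⟩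
  simp only [bundleValue, Finset.sum_empty, zero_add]
  refine ⟨hx, by linarith, le_of_mul_le_mul_left ?_ hp⟩
  nlinarith [mul_le_mul_of_nonneg_left hratio (ha.trans hP.le),
    mul_le_mul_of_nonneg_left hqP hx.le]

theorem MNW.exists_good_le_of_envy (hnonneg : ∀ i g, 0 ≤ vM i g) {A : Alloc n m}
    (hA : MNW vM μ A) {i j : Fin n} (henvy : util vM μ A i < valOn vM μ A i j) :
    ∃ g ∈ A.ind j, valOn vM μ A i j ≤ util vM μ A i + vM i g := by
  have hij : i ≠ j := by rintro rfl; exact henvy.ne rfl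
  have hother : ∀ {T S} (hSm : MeasurableSet S) hS₁, T ⊆ A.ind j → S ⊆ A.piece j →
      ∀ k, k ≠ i → k ≠ j → util vM μ (A.give i T S hSm hS₁) k = util vM μ A k :=
    fun _ _ hT hS k hki hkj => util_give_of_disjoint A _ _ hki
      ((A.disjoint_ind hkj).mono_right hT) ((A.disjoint_piece hkj).mono_right hS)
  have ha := util_nonneg (μ := μ) hnonneg A i
  by_contra! hPg
  rcases (util_nonneg (μ := μ) hnonneg A j).eq_or_lt with hb | hb
  · have hi' := util_give_self (vM := vM) (μ := μ) A (A.piece_measurable j)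
      (A.piece_subset_Ico j) (A.disjoint_ind hij) (A.disjoint_piece hij)
    change _ = _ + valOn vM μ A i j at hi'
    have := hA.util_le_of_eq_off_pair (hother _ _ subset_rfl subset_rfl) (hb ▸ lt_irrefl 0)
      (by rw [hi']; linarith)
    linarith
  obtain ⟨T, hT, S, hS, hSm, hx, hxP, hratio⟩ :=
    exists_subbundle_mul_le hnonneg (A.piece_measurable j) ha henvy hPg
  have hS₁ := hS.trans (A.piece_subset_Ico j)
  have hi' := util_give_self (vM := vM) (μ := μ) A hSm hS₁ ((A.disjoint_ind hij).mono_right hT)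
    ((A.disjoint_piece hij).mono_right hS)
  have hj' := util_give_of_subset (vM := vM) (μ := μ) A hSm hS₁ hij.symm hT hS
  have hgain := mul_lt_add_mul_sub hb hx (bundleValue_nonneg hnonneg j T S) hxP hratio
  have hbpos : 0 < util vM μ A j - bundleValue vM μ j T S :=
    pos_of_mul_pos_right ((mul_nonneg ha hb.le).trans_lt hgain) (by linarith)
  have := hA.mul_le_of_eq_off_pair hij (hother hSm hS₁ hT hS) hb (by rw [hi']; linarith)
    (by rw [hj']; exact hbpos)
  rw [hi', hj'] at this
  linarith

theorem MNW.ef1m (hnonneg : ∀ i g, 0 ≤ vM i g) {A : Alloc n m} (hA : MNW vM μ A) :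
    EF1M vM μ A := by
  intro i j
  refine ⟨fun hemp => ?_, fun hne => ?_⟩
  · by_contra! henvy
    obtain ⟨g, hg, -⟩ := hA.exists_good_le_of_envy hnonneg henvy
    simp [hemp] at hg
  by_cases henvy : util vM μ A i < valOn vM μ A i j
  · obtain ⟨g, hg, hle⟩ := hA.exists_good_le_of_envy hnonneg henvy
    exact ⟨g, hg, by rw [valOnErase_eq hg]; linarith⟩
  · obtain ⟨g, hg⟩ := Finset.nonempty_iff_ne_empty.2 hne
    exact ⟨g, hg, by rw [valOnErase_eq hg]; linarith [hnonneg i g]⟩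

end Allocations

theorem MNW_is_EF1M_and_PO_general {n m : ℕ}
    (vM : Fin n → Fin m → ℝ) (μ : Fin n → Measure ℝ)
    [∀ i, IsFiniteMeasure (μ i)]
    (hnonneg : ∀ i g, 0 ≤ vM i g)
    (hatom : ∀ (i : Fin n) (x : ℝ), μ i {x} = 0)
    (A : Alloc n m) (hA : MNW vM μ A) :
    EF1M vM μ A ∧ PO vM μ A := by
  have : ∀ i, NullSingletonClass (μ i) := fun i => ⟨hatom i⟩
  exact ⟨hA.ef1m hnonneg, hA.po hnonneg⟩

/-- when all agents have additive valuations, every maximum Nash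
welfare (MNW) allocation of the mixed goods is EF1M and PO. -/
theorem MNW_is_EF1M_and_PO {n m l : ℕ}
    (vM : Fin n → Fin m → ℝ) (μ : Fin n → Measure ℝ)
    [∀ i, IsFiniteMeasure (μ i)]
    (hnonneg : ∀ i g, 0 ≤ vM i g)
    (hatom : ∀ (i : Fin n) (x : ℝ), μ i {x} = 0)
    (hagent : ∀ i : Fin n, (∃ g, 0 < vM i g) ∨ μ i (Set.Ico (0 : ℝ) 1) ≠ 0)
    (hgoodM : ∀ g : Fin m, ∃ i, 0 < vM i g)
    (hgoodC : ∀ j : Fin l, ∃ i, μ i (dgInterval l j) ≠ 0)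
    (A : Alloc n m) (hA : MNW vM μ A) :
    EF1M vM μ A ∧ PO vM μ A :=
  MNW_is_EF1M_and_PO_general vM μ hnonneg hatom A hA
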